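/- The set L₀ of formulas α such that for all a and φ, α satisfiable and α ⊨ □_a φ imply φ ≡ ⊤, contains every purely propositional satisfiable formula conjoined with diamond formulas; in particular, any conjunction of literals and formulas of the form ◇_a ψ with ψ satisfiable and the conjunction satisfiable belongs to L₀. -/

import Mathlib

/-- Modal formulas over label set `A` and proposition set `P`. -/
inductive Form (A P : Type) : Type
  | top : Form A P
  | atom : P → Form A P
  | neg : Form A P → Form A P
  | or : Form A P → Form A P → Form A P
  | dia : A → Form A P → Form A P

namespace Form
variable {A P : Type}
def and (φ ψ : Form A P) : Form A P := Form.neg ((Form.neg φ).or (Form.neg ψ))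
def box (a : A) (φ : Form A P) : Form A P := Form.neg (Form.dia a (Form.neg φ))
def bot : Form A P := Form.neg Form.top
def imp (φ ψ : Form A P) : Form A P := (Form.neg φ).or ψ
end Form

/-- Kripke models. -/
structure Kripke (A P : Type) : Type 1 where
  W : Type
  val : W → P → Prop
  rel : A → W → W → Prop
  actual : Set W

variable {A P : Type}

/-- Satisfaction of a modal formula at a world. -/
def sat (M : Kripke A P) : M.W → Form A P → Prop
  | _, .top => True
  | w, .atom p => M.val w p
  | w, .neg φ => ¬ sat M w φ
  | w, .or φ ψ => sat M w φ ∨ sat M w ψ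
  | w, .dia a φ => ∃ v, M.rel a w v ∧ sat M v φ

/-- Semantic entailment over all Kripke models. -/
def entails (φ ψ : Form A P) : Prop := ∀ (M : Kripke A P) (w : M.W), sat M w φ → sat M w ψ

/-- Semantic equivalence. -/
def equivF (φ ψ : Form A P) : Prop := entails φ ψ ∧ entails ψ φ

def satisfiable (φ : Form A P) : Prop := ∃ (M : Kripke A P) (w : M.W), sat M w φ

def valid (φ : Form A P) : Prop := ∀ (M : Kripke A P) (w : M.W), sat M w φ

/-- Finite disjunction (empty disjunction is `⊥`). -/
def bigOr : List (Form A P) → Form A P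
  | [] => Form.bot
  | φ :: l => φ.or (bigOr l)

/-- Finite conjunction (empty conjunction is `⊤`). -/
def bigAnd : List (Form A P) → Form A P
  | [] => Form.top
  | φ :: l => φ.and (bigAnd l)

/-- `⋀_{a ∈ A} □_a (ξ a)` for a finite label set `A`. -/
noncomputable def boxConj [Fintype A] (ξ : A → Form A P) : Form A P :=
  bigAnd ((Finset.univ : Finset A).toList.map fun a => Form.box a (ξ a))

/-- `R` is a bisimulation between Kripke models `M` and `N`. -/
def IsBisim (M N : Kripke A P) (R : M.W → N.W → Prop) : Prop :=
  ∀ w v, R w v →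
    ((∀ p, M.val w p ↔ N.val v p) ∧
     (∀ a w', M.rel a w w' → ∃ v', N.rel a v v' ∧ R w' v') ∧
     (∀ a v', N.rel a v v' → ∃ w', M.rel a w w' ∧ R w' v'))

/-- Pointed bisimilarity of Kripke models (Zig0/Zag0 on actual worlds). -/
def Bisimilar (M N : Kripke A P) : Prop :=
  ∃ R, IsBisim M N R ∧ (∀ w ∈ M.actual, ∃ v ∈ N.actual, R w v) ∧
       (∀ v ∈ N.actual, ∃ w ∈ M.actual, R w v)

/-- Action models. -/
structure ActionModel (A P : Type) : Type 1 where
  E : Type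
  pre : E → Form A P
  rel : A → E → E → Prop
  actual : Set E

/-- The update product `M ⊗ 𝔄`. -/
def update (M : Kripke A P) (𝔄 : ActionModel A P) : Kripke A P where
  W := {p : M.W × 𝔄.E // sat M p.1 (𝔄.pre p.2)}
  val w p := M.val w.1.1 p
  rel a w v := M.rel a w.1.1 v.1.1 ∧ 𝔄.rel a w.1.2 v.1.2
  actual := {w | w.1.1 ∈ M.actual ∧ w.1.2 ∈ 𝔄.actual}

/-- Action model equivalence: same updating effect (up to bisimilarity) on every Kripke model. -/
def AMEquiv (𝔄 𝔅 : ActionModel A P) : Prop :=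
  ∀ M : Kripke A P, Bisimilar (update M 𝔄) (update M 𝔅)

/-- `S` is an action bisimulation between action models `𝔄` and `𝔅`. -/
def IsActBisim (𝔄 𝔅 : ActionModel A P) (S : 𝔄.E → 𝔅.E → Prop) : Prop :=
  ∀ x y, S x y →
    (equivF (𝔄.pre x) (𝔅.pre y) ∧
     (∀ a x', 𝔄.rel a x x' → satisfiable ((𝔄.pre x).and (Form.dia a (𝔄.pre x'))) →
        ∃ y', 𝔅.rel a y y' ∧ S x' y') ∧
     (∀ a y', 𝔅.rel a y y' → satisfiable ((𝔅.pre y).and (Form.dia a (𝔅.pre y'))) →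
        ∃ x', 𝔄.rel a x x' ∧ S x' y'))

/-- Action bisimilarity of action models (with Zig0/Zag0 on actual events). -/
def ActBisimilar (𝔄 𝔅 : ActionModel A P) : Prop :=
  ∃ S, IsActBisim 𝔄 𝔅 S ∧ (∀ x ∈ 𝔄.actual, ∃ y ∈ 𝔅.actual, S x y) ∧
       (∀ y ∈ 𝔅.actual, ∃ x ∈ 𝔄.actual, S x y)

/-- Zig of the generalized action emulation:
`η(x,y) ⊨ □_a (Pre^𝔄(x') → ⋁_{y →_a y'} (Pre^𝔅(y') ∧ η(x',y')))`, rendered semantically. -/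
def GAEZig (𝔄 𝔅 : ActionModel A P) (η : 𝔄.E → 𝔅.E → Form A P) : Prop :=
  ∀ (a : A) (x : 𝔄.E) (y : 𝔅.E) (x' : 𝔄.E), 𝔄.rel a x x' →
    ∀ (M : Kripke A P) (w v : M.W), sat M w (η x y) → M.rel a w v → sat M v (𝔄.pre x') →
      ∃ y', 𝔅.rel a y y' ∧ sat M v (𝔅.pre y') ∧ sat M v (η x' y')

/-- Zag of the generalized action emulation. -/
def GAEZag (𝔄 𝔅 : ActionModel A P) (η : 𝔄.E → 𝔅.E → Form A P) : Prop :=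
  ∀ (a : A) (x : 𝔄.E) (y : 𝔅.E) (y' : 𝔅.E), 𝔅.rel a y y' →
    ∀ (M : Kripke A P) (w v : M.W), sat M w (η x y) → M.rel a w v → sat M v (𝔅.pre y') →
      ∃ x', 𝔄.rel a x x' ∧ sat M v (𝔄.pre x') ∧ sat M v (η x' y')

/-- Zig0 of the generalized action emulation:
`Pre^𝔄(x) ⊨ ⋁_{y ∈ E₀^𝔅} (Pre^𝔅(y) ∧ η(x,y))` for actual `x`. -/
def GAEZig0 (𝔄 𝔅 : ActionModel A P) (η : 𝔄.E → 𝔅.E → Form A P) : Prop :=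
  ∀ x ∈ 𝔄.actual, ∀ (M : Kripke A P) (w : M.W), sat M w (𝔄.pre x) →
    ∃ y ∈ 𝔅.actual, sat M w (𝔅.pre y) ∧ sat M w (η x y)

/-- Zag0 of the generalized action emulation. -/
def GAEZag0 (𝔄 𝔅 : ActionModel A P) (η : 𝔄.E → 𝔅.E → Form A P) : Prop :=
  ∀ y ∈ 𝔅.actual, ∀ (M : Kripke A P) (w : M.W), sat M w (𝔅.pre y) →
    ∃ x ∈ 𝔄.actual, sat M w (𝔄.pre x) ∧ sat M w (η x y)

/-- `η` is a generalized action emulation witnessing `𝔄 ⇄_G 𝔅`. -/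
def IsGAE (𝔄 𝔅 : ActionModel A P) (η : 𝔄.E → 𝔅.E → Form A P) : Prop :=
  GAEZig 𝔄 𝔅 η ∧ GAEZag 𝔄 𝔅 η ∧ GAEZig0 𝔄 𝔅 η ∧ GAEZag0 𝔄 𝔅 η

/-- `S` is a propositional action emulation witnessing `𝔄 ⇄_P 𝔅`
(Consistency, Zig, Zag, Zig0, Zag0; disjunctions rendered semantically). -/
def IsPAEW (𝔄 𝔅 : ActionModel A P) (S : 𝔄.E → 𝔅.E → Prop) : Prop :=
  (∀ x y, S x y → satisfiable ((𝔄.pre x).and (𝔅.pre y))) ∧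
  (∀ (a : A) x y x', S x y → 𝔄.rel a x x' →
     ∀ (M : Kripke A P) (w : M.W), sat M w (𝔄.pre x') →
       ∃ y', 𝔅.rel a y y' ∧ S x' y' ∧ sat M w (𝔅.pre y')) ∧
  (∀ (a : A) x y y', S x y → 𝔅.rel a y y' →
     ∀ (M : Kripke A P) (w : M.W), sat M w (𝔅.pre y') →
       ∃ x', 𝔄.rel a x x' ∧ S x' y' ∧ sat M w (𝔄.pre x')) ∧
  (∀ x ∈ 𝔄.actual, ∀ (M : Kripke A P) (w : M.W), sat M w (𝔄.pre x) →
     ∃ y ∈ 𝔅.actual, S x y ∧ sat M w (𝔅.pre y)) ∧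
  (∀ y ∈ 𝔅.actual, ∀ (M : Kripke A P) (w : M.W), sat M w (𝔅.pre y) →
     ∃ x ∈ 𝔄.actual, S x y ∧ sat M w (𝔄.pre x))

/-- `S` is an action emulation witnessing `𝔄 ⇄ 𝔅`
(Consistency, Zig, Zag, Zig0, Zag0; disjunctions and boxes rendered semantically). -/
def IsAEW (𝔄 𝔅 : ActionModel A P) (S : 𝔄.E → 𝔅.E → Prop) : Prop :=
  (∀ x y, S x y → satisfiable ((𝔄.pre x).and (𝔅.pre y))) ∧
  (∀ (a : A) x y x', S x y → 𝔄.rel a x x' →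
     ∀ (M : Kripke A P) (w v : M.W), sat M w (𝔄.pre x) → sat M w (𝔅.pre y) →
       M.rel a w v → sat M v (𝔄.pre x') →
       ∃ y', 𝔅.rel a y y' ∧ S x' y' ∧ sat M v (𝔅.pre y')) ∧
  (∀ (a : A) x y y', S x y → 𝔅.rel a y y' →
     ∀ (M : Kripke A P) (w v : M.W), sat M w (𝔄.pre x) → sat M w (𝔅.pre y) →
       M.rel a w v → sat M v (𝔅.pre y') →
       ∃ x', 𝔄.rel a x x' ∧ S x' y' ∧ sat M v (𝔄.pre x')) ∧
  (∀ x ∈ 𝔄.actual, ∀ (M : Kripke A P) (w : M.W), sat M w (𝔄.pre x) →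
     ∃ y ∈ 𝔅.actual, S x y ∧ sat M w (𝔅.pre y)) ∧
  (∀ y ∈ 𝔅.actual, ∀ (M : Kripke A P) (w : M.W), sat M w (𝔅.pre y) →
     ∃ x ∈ 𝔄.actual, S x y ∧ sat M w (𝔄.pre x))

/-- `L₀`: formulas `α` such that if `α` is satisfiable and `α ⊨ □_a φ` then `φ` is valid. -/
def L0 : Set (Form A P) :=
  {α | satisfiable α → ∀ (a : A) (φ : Form A P), entails α (Form.box a φ) → valid φ}

/-- `Φ` is `Ψ`-regular. -/
def Regular (Φ Ψ : Set (Form A P)) : Prop :=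
  ∀ φ ∈ Φ, ∀ ψ ∈ Ψ, entails ψ φ ∨ entails ψ φ.neg

/-- `Φ` is `Ψ`-basis: every `φ ∈ Φ` is equivalent to a disjunction of a subset of `Ψ`
(disjunction rendered semantically). -/
def IsBasisFor (Φ Ψ : Set (Form A P)) : Prop :=
  ∀ φ ∈ Φ, ∃ Ψ' ⊆ Ψ, ∀ (M : Kripke A P) (w : M.W), sat M w φ ↔ ∃ ψ ∈ Ψ', sat M w ψ

/-- `Φ` is `Ψ`-discrete: if `φ ∈ Φ` entails a finite disjunction `⋁_l ⋀_a □_a ξ_l^a`, then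
`φ ⊨ ⋁_l ⋁ G(⋀_a □_a ξ_l^a, Ψ)` (outer disjunctions rendered semantically). -/
def Discrete [Fintype A] (Φ Ψ : Set (Form A P)) : Prop :=
  ∀ φ ∈ Φ, ∀ (L : ℕ) (ξ : Fin L → A → Form A P),
    entails φ (bigOr ((List.finRange L).map fun l => boxConj (ξ l))) →
    ∀ (M : Kripke A P) (w : M.W), sat M w φ →
      ∃ (l : Fin L), ∃ ψ ∈ Ψ, entails ψ (boxConj (ξ l)) ∧ sat M w ψ

/-- `Φ` is `Ψ`-known: if `φ ∈ Φ` and `φ ⊨ □_a ξ`, then `φ ⊨ □_a ⋁ G(ξ, Ψ)`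
(inner disjunction rendered semantically). -/
def Known (Φ Ψ : Set (Form A P)) : Prop :=
  ∀ φ ∈ Φ, ∀ (a : A) (χ : Form A P), entails φ (Form.box a χ) →
    ∀ (M : Kripke A P) (w v : M.W), sat M w φ → M.rel a w v →
      ∃ ψ ∈ Ψ, entails ψ χ ∧ sat M v ψ

/-- `R_a^𝔄(x)`. -/
def Rset (𝔄 : ActionModel A P) (a : A) (x : 𝔄.E) : Set 𝔄.E :=
  {y | satisfiable ((𝔄.pre x).and (Form.dia a (𝔄.pre y)))}

/-- `Q_a^𝔄(x)`. -/
def Qset (𝔄 : ActionModel A P) (a : A) (x : 𝔄.E) : Set 𝔄.E :=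
  {y | 𝔄.rel a x y ∧ satisfiable ((𝔄.pre x).and (Form.dia a (𝔄.pre y)))}

/-- Modal depth. -/
def depth : Form A P → ℕ
  | .top => 0
  | .atom _ => 0
  | .neg φ => depth φ
  | .or φ ψ => max (depth φ) (depth ψ)
  | .dia _ φ => depth φ + 1

/-- Subformulas. -/
def Subf : Form A P → List (Form A P)
  | .top => [.top]
  | .atom p => [.atom p]
  | .neg φ => .neg φ :: Subf φ
  | .or φ ψ => .or φ ψ :: (Subf φ ++ Subf ψ)
  | .dia a φ => .dia a φ :: Subf φ

/-- Single negation. -/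
def singleNeg : Form A P → Form A P
  | .neg φ => φ
  | φ => .neg φ

/-- Closure under subformulas and single negations. -/
def closureF (φ : Form A P) : Set (Form A P) :=
  {χ | χ ∈ Subf φ ∨ ∃ ψ ∈ Subf φ, χ = singleNeg ψ}

lemma sat_and' {M : Kripke A P} {w : M.W} {φ ψ : Form A P} :
    sat M w (φ.and ψ) ↔ sat M w φ ∧ sat M w ψ := by
  simp [Form.and, sat]

lemma sat_bigAnd' {M : Kripke A P} {w : M.W} {l : List (Form A P)} :
    sat M w (bigAnd l) ↔ ∀ φ ∈ l, sat M w φ := by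
  induction l with
  | nil => simp [bigAnd, sat]
  | cons φ l ih => simp [bigAnd, sat_and', ih]

lemma sat_box' {M : Kripke A P} {w : M.W} {a : A} {φ : Form A P} :
    sat M w (Form.box a φ) ↔ ∀ v, M.rel a w v → sat M v φ := by
  simp [Form.box, sat]

open Classical in
/-- A witnessing model/world for a formula (arbitrary if unsatisfiable). -/
noncomputable def wit (χ : Form A P) : Σ' (M : Kripke A P), M.W :=
  if h : satisfiable χ then ⟨h.choose, h.choose_spec.choose⟩
  else ⟨⟨Unit, fun _ _ => False, fun _ _ _ => False, ∅⟩, ()⟩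

lemma wit_sat {χ : Form A P} (h : satisfiable χ) : sat (wit χ).1 (wit χ).2 χ := by
  unfold wit
  rw [dif_pos h]
  exact h.choose_spec.choose_spec

lemma sat_embed {M K : Kripke A P} (f : M.W → K.W)
    (hval : ∀ w p, K.val (f w) p ↔ M.val w p)
    (hrel : ∀ a w v', K.rel a (f w) v' ↔ ∃ v, v' = f v ∧ M.rel a w v) :
    ∀ (φ : Form A P) (w : M.W), sat K (f w) φ ↔ sat M w φ := by
  intro φ
  induction φ with
  | top => intro w; simp [sat]
  | atom p => intro w; simpa [sat] using hval w p
  | neg φ ih => intro w; simp [sat, ih]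
  | or φ ψ ih1 ih2 => intro w; simp [sat, ih1, ih2]
  | dia a φ ih =>
    intro w
    simp only [sat]
    constructor
    · rintro ⟨v', hr, hs⟩
      rw [hrel] at hr
      obtain ⟨v, rfl, hr⟩ := hr
      exact ⟨v, hr, (ih v).1 hs⟩
    · rintro ⟨v, hr, hs⟩
      exact ⟨f v, (hrel a w (f v)).2 ⟨v, rfl, hr⟩, (ih v).2 hs⟩

/-- any satisfiable conjunction of literals and formulas `◇_a ψ` with `ψ`
satisfiable belongs to `L₀`. -/
theorem literals_diamonds_mem_L0 (l : List (Form A P))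
    (hl : ∀ φ ∈ l, (∃ p, φ = Form.atom p ∨ φ = Form.neg (Form.atom p)) ∨
          ∃ (a : A) (ψ : Form A P), φ = Form.dia a ψ ∧ satisfiable ψ)
    (hsat : satisfiable (bigAnd l)) : bigAnd l ∈ L0 := by
  intro _ a φ hent
  by_contra hφ
  simp only [valid, not_forall] at hφ
  obtain ⟨N, u, hu⟩ := hφ
  obtain ⟨M0, w0, hw0⟩ := hsat
  -- build the glued model
  set K : Kripke A P :=
    { W := Option (N.W ⊕ Σ χ : Form A P, (wit χ).1.W)
      val := fun w p => match w with
        | none => M0.val w0 p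
        | some (.inl v) => N.val v p
        | some (.inr v) => (wit v.1).1.val v.2 p
      rel := fun b w v => match w, v with
        | some (.inl x), some (.inl y) => N.rel b x y
        | some (.inr x), some (.inr y) =>
            ∃ u' : (wit x.1).1.W, y = ⟨x.1, u'⟩ ∧ (wit x.1).1.rel b x.2 u'
        | none, some (.inl y) => b = a ∧ y = u
        | none, some (.inr y) => Form.dia b y.1 ∈ l ∧ y.2 = (wit y.1).2
        | _, _ => False
      actual := ∅ } with hK
  -- N embeds
  have embN : ∀ (ψ : Form A P) (v : N.W), sat K (some (Sum.inl v)) ψ ↔ sat N v ψ := by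
    refine sat_embed (K := K) (fun v => some (Sum.inl v)) (fun w p => ?_) (fun b w v' => ?_)
    · simp [K]
    · match v' with
      | none => simp [K]
      | some (.inl y) => simp [K]
      | some (.inr y) => simp [K]
  -- each witness model embeds
  have embW : ∀ (χ ψ : Form A P) (v : (wit χ).1.W),
      sat K (some (Sum.inr ⟨χ, v⟩)) ψ ↔ sat (wit χ).1 v ψ := by
    intro χ
    refine sat_embed (K := K) (fun v => (some (Sum.inr ⟨χ, v⟩) : K.W)) (fun w p => ?_)
      (fun b w v' => ?_)
    · simp [K]
    · match v' with
      | none => simp [K]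
      | some (.inl y) => simp [K]
      | some (.inr y) =>
        constructor
        · rintro ⟨u', rfl, hr⟩
          exact ⟨u', rfl, hr⟩
        · rintro ⟨v, h, hr⟩
          simp only [K, Option.some.injEq, Sum.inr.injEq] at h
          subst h
          exact ⟨v, rfl, hr⟩
  -- the root satisfies bigAnd l
  have hroot : sat K none (bigAnd l) := by
    rw [sat_bigAnd']
    intro ψ hψ
    rcases hl ψ hψ with ⟨p, hp | hp⟩ | ⟨b, χ, rfl, hχ⟩
    · subst hp
      have := (sat_bigAnd'.1 hw0) _ hψ
      simpa [sat, hK] using this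
    · subst hp
      have := (sat_bigAnd'.1 hw0) _ hψ
      simpa [sat, hK] using this
    · refine ⟨(some (Sum.inr ⟨χ, (wit χ).2⟩) : K.W), ?_, ?_⟩
      · exact ⟨hψ, rfl⟩
      · exact (embW χ χ _).2 (wit_sat hχ)
  -- but the root has an a-successor refuting φ
  have hbox := hent K none hroot
  rw [sat_box'] at hbox
  have : sat K (some (Sum.inl u)) φ := hbox _ ⟨rfl, rfl⟩
  exact hu ((embN φ u).1 this)
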